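/- arXiv:1907.04805 — 4 statements merged into one kernel-verified Lean document; each statement's English description precedes it below -/
import Mathlib

section
/- (General loss bound, no unobserved confounders.) Let P, Q, R and R̂ be distributions over (W,T,Y), with q(t) > 0 and q(w,t) > 0 for q ∈ {P,Q,R,R̂} and all w ∈ W, t ∈ {0,1}. Assume causal invariance among P, Q, R: P(y|T=t,W=w) = Q(y|T=t,W=w) = R(y|T=t,W=w) for all w,t,y. Define α̂_t = Σ_w R̂(w|T=t) · Σ_y y·R̂(y|T=t,W=w), α_t = Σ_w R(w|T=t) · Σ_y y·R(y|T=t,W=w), the estimated effect h = α̂_1 − α̂_0, and the true average causal effect h* = E_P[Y|T=1] − E_P[Y|T=0]. Then the L1 loss satisfies |h − h*| ≤ |α̂_1 − α_1| + |α̂_0 − α_0| + |WLD_{T=1}(R,P)| + |WLD_{T=0}(R,P)|. -/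
open Finset

/-- A distribution over `(W, T, Y)` where `T` takes values in `{0,1}` (`Fin 2`):
a nonnegative function summing to one. -/
def IsDist {W Y : Type*} [Fintype W] [Fintype Y] (q : W → Fin 2 → Y → ℝ) : Prop :=
  (∀ w t y, 0 ≤ q w t y) ∧ ∑ w, ∑ t, ∑ y, q w t y = 1

section Marginals

variable {W Y : Type*} [Fintype W] [Fintype Y]

/-- `q(w,t) = Σ_y q(w,t,y)` -/
noncomputable def pWT (q : W → Fin 2 → Y → ℝ) (w : W) (t : Fin 2) : ℝ := ∑ y, q w t y

/-- `q(t) = Σ_w q(w,t)` -/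
noncomputable def pT (q : W → Fin 2 → Y → ℝ) (t : Fin 2) : ℝ := ∑ w, pWT q w t

/-- `q(w) = Σ_t q(w,t)` -/
noncomputable def pW (q : W → Fin 2 → Y → ℝ) (w : W) : ℝ := ∑ t, pWT q w t

/-- `q(w | T = t) = q(w,t) / q(t)` -/
noncomputable def condW (q : W → Fin 2 → Y → ℝ) (w : W) (t : Fin 2) : ℝ := pWT q w t / pT q t

/-- `q(T = t | W = w) = q(w,t) / q(w)` -/
noncomputable def condT (q : W → Fin 2 → Y → ℝ) (w : W) (t : Fin 2) : ℝ := pWT q w t / pW q w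

/-- `q(y | T = t, W = w) = q(w,t,y) / q(w,t)` -/
noncomputable def condY (q : W → Fin 2 → Y → ℝ) (w : W) (t : Fin 2) (y : Y) : ℝ :=
  q w t y / pWT q w t

/-- `q(y, w | T = t) = q(w,t,y) / q(t)` -/
noncomputable def condYW (q : W → Fin 2 → Y → ℝ) (w : W) (t : Fin 2) (y : Y) : ℝ :=
  q w t y / pT q t

/-- `E_q[Y | T = t, W = w] = Σ_y ν(y) · q(y | T=t, W=w)`, where `ν` gives the real
outcome value of each element of `Y`. -/
noncomputable def condE (ν : Y → ℝ) (q : W → Fin 2 → Y → ℝ) (w : W) (t : Fin 2) : ℝ :=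
  ∑ y, ν y * condY q w t y

/-- `E_q[Y | T = t] = Σ_w q(w | T=t) · E_q[Y | T=t, W=w]` -/
noncomputable def Ey (ν : Y → ℝ) (q : W → Fin 2 → Y → ℝ) (t : Fin 2) : ℝ :=
  ∑ w, condW q w t * condE ν q w t

end Marginals

/-- **General loss bound, no unobserved confounders.**
With `α̂_t` computed from the empirical representation `R̂`, `α_t` from `R`,
`h = α̂_1 − α̂_0` the estimated effect and `h* = E_P[Y|T=1] − E_P[Y|T=0]` the true
average causal effect, the L1 loss satisfies
`|h − h*| ≤ |α̂_1 − α_1| + |α̂_0 − α_0| + |WLD_{T=1}(R,P)| + |WLD_{T=0}(R,P)|`. -/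
theorem loss_bound_no_unobserved_confounders
    {W Y : Type*} [Fintype W] [Fintype Y] [Nonempty W] [Nonempty Y]
    (ν : Y → ℝ) (P Q R Rhat : W → Fin 2 → Y → ℝ)
    (hP : IsDist P) (hQ : IsDist Q) (hR : IsDist R) (hRhat : IsDist Rhat)
    (hPt : ∀ t, 0 < pT P t) (hQt : ∀ t, 0 < pT Q t)
    (hRt : ∀ t, 0 < pT R t) (hRhatt : ∀ t, 0 < pT Rhat t)
    (hPwt : ∀ w t, 0 < pWT P w t) (hQwt : ∀ w t, 0 < pWT Q w t)
    (hRwt : ∀ w t, 0 < pWT R w t) (hRhatwt : ∀ w t, 0 < pWT Rhat w t)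
    (hinvPQ : ∀ w t y, condY P w t y = condY Q w t y)
    (hinvRQ : ∀ w t y, condY R w t y = condY Q w t y)
    (αhat α : Fin 2 → ℝ)
    (hαhat : ∀ t, αhat t = ∑ w, condW Rhat w t * ∑ y, ν y * condY Rhat w t y)
    (hα : ∀ t, α t = ∑ w, condW R w t * ∑ y, ν y * condY R w t y)
    (WLD : Fin 2 → ℝ)
    (hWLD : ∀ t, WLD t = ∑ w, (condW R w t - condW P w t) * condE ν Q w t) :
    |(αhat 1 - αhat 0) - (Ey ν P 1 - Ey ν P 0)| ≤
      |αhat 1 - α 1| + |αhat 0 - α 0| + |WLD 1| + |WLD 0| := by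
  have key : ∀ t, α t - Ey ν P t = WLD t := by
    intro t
    rw [hα t, hWLD t, Ey, ← Finset.sum_sub_distrib]
    refine Finset.sum_congr rfl fun w _ => ?_
    have h1 : (∑ y, ν y * condY R w t y) = condE ν Q w t := by
      unfold condE; exact Finset.sum_congr rfl fun y _ => by rw [hinvRQ]
    have h2 : condE ν P w t = condE ν Q w t := by
      unfold condE; exact Finset.sum_congr rfl fun y _ => by rw [hinvPQ]
    rw [h1, h2]; ring
  have e : (αhat 1 - αhat 0) - (Ey ν P 1 - Ey ν P 0)
      = (αhat 1 - α 1) - (αhat 0 - α 0) + WLD 1 - WLD 0 := by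
    rw [← key 1, ← key 0]; ring
  rw [e]
  calc |(αhat 1 - α 1) - (αhat 0 - α 0) + WLD 1 - WLD 0|
      ≤ |(αhat 1 - α 1) - (αhat 0 - α 0) + WLD 1| + |WLD 0| := abs_sub _ _
    _ ≤ |(αhat 1 - α 1) - (αhat 0 - α 0)| + |WLD 1| + |WLD 0| := by
        gcongr; exact abs_add_le _ _
    _ ≤ |αhat 1 - α 1| + |αhat 0 - α 0| + |WLD 1| + |WLD 0| := by
        gcongr; exact abs_sub _ _
end

section
/- (Bias part of the loss bound.) Let P, Q, R be distributions over (W,T,Y) with q(t) > 0 and q(w,t) > 0 for q ∈ {P,Q,R} and all w ∈ W, t ∈ {0,1}, satisfying causal invariance P(y|T=t,W=w) = Q(y|T=t,W=w) = R(y|T=t,W=w) for all w,t,y. Then |(E_R[Y|T=1] − E_R[Y|T=0]) − (E_P[Y|T=1] − E_P[Y|T=0])| ≤ |WLD_{T=1}(R,P)| + |WLD_{T=0}(R,P)|. -/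
open Finset

/-- **Bias part of the loss bound.** Under causal invariance among
`P`, `Q`, `R`:
`|(E_R[Y|T=1] − E_R[Y|T=0]) − (E_P[Y|T=1] − E_P[Y|T=0])| ≤ |WLD_{T=1}(R,P)| + |WLD_{T=0}(R,P)|`. -/
theorem bias_bound_wld
    {W Y : Type*} [Fintype W] [Fintype Y] [Nonempty W] [Nonempty Y]
    (ν : Y → ℝ) (P Q R : W → Fin 2 → Y → ℝ)
    (hP : IsDist P) (hQ : IsDist Q) (hR : IsDist R)
    (hPt : ∀ t, 0 < pT P t) (hQt : ∀ t, 0 < pT Q t) (hRt : ∀ t, 0 < pT R t)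
    (hPwt : ∀ w t, 0 < pWT P w t) (hQwt : ∀ w t, 0 < pWT Q w t)
    (hRwt : ∀ w t, 0 < pWT R w t)
    (hinvPQ : ∀ w t y, condY P w t y = condY Q w t y)
    (hinvRQ : ∀ w t y, condY R w t y = condY Q w t y)
    (WLD : Fin 2 → ℝ)
    (hWLD : ∀ t, WLD t = ∑ w, (condW R w t - condW P w t) * condE ν Q w t) :
    |(Ey ν R 1 - Ey ν R 0) - (Ey ν P 1 - Ey ν P 0)| ≤ |WLD 1| + |WLD 0| := by
  have hE : ∀ t, Ey ν R t - Ey ν P t = WLD t := by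
    intro t
    rw [hWLD t, Ey, Ey, ← Finset.sum_sub_distrib]
    refine Finset.sum_congr rfl fun w _ => ?_
    have h1 : condE ν R w t = condE ν Q w t := by
      simp [condE, hinvRQ]
    have h2 : condE ν P w t = condE ν Q w t := by
      simp [condE, hinvPQ]
    rw [h1, h2]; ring
  have : (Ey ν R 1 - Ey ν R 0) - (Ey ν P 1 - Ey ν P 0) = WLD 1 - WLD 0 := by
    rw [← hE 1, ← hE 0]; ring
  rw [this]
  exact abs_sub _ _
end

section
/- (Estimable form of the weighted L1 distance.) Let P and Q be distributions over (W,T,Y) with q(t) > 0, q(w,t) > 0 and q(w) > 0 for q ∈ {P,Q} and all w ∈ W, t ∈ {0,1}, and assume P(w|T=t) = P(w) = Q(w) for all w,t. Let β : W × {0,1} → ℝ be any weighting function, let R be defined by R(w|T=t) = β(w,t)·Q(w|T=t), and let β*(w,t) = Q(w)/Q(w|T=t). Then for each t ∈ {0,1}: WLD_{T=t}(R,P) = Σ_{w∈W} Σ_{y∈𝒴} y·β(w,t)·Q(y,w|T=t) − Σ_{w∈W} Σ_{y∈𝒴} y·β*(w,t)·Q(w|T=t)·Q(y|T=t,W=w);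 i.e. WLD_{T=t}(R,P) equals E_Q[Yβ | T=t] minus E_Q[Yβ* | T=t]. -/
open Finset

/-! Since `Q(y,w|T=t) = Q(w|T=t)·Q(y|T=t,W=w)`, the first sum is `Σ_w R(w|T=t)·E_Q[Y|T=t,W=w]`.
The inverse-propensity weight `β*` turns `Q(w|T=t)` into `Q(w) = P(w|T=t)`, so the second sum is
`Σ_w P(w|T=t)·E_Q[Y|T=t,W=w]`; subtracting gives the weighted L1 distance. -/

section Conditionals

variable {W Y : Type*} [Fintype Y]

theorem condYW_eq_condW_mul_condY [Fintype W] {q : W → Fin 2 → Y → ℝ} {w : W} {t : Fin 2}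
    (y : Y) (hwt : pWT q w t ≠ 0) : condYW q w t y = condW q w t * condY q w t y := by
  rw [condYW, condW, condY]
  field_simp

theorem sum_mul_condY (ν : Y → ℝ) (q : W → Fin 2 → Y → ℝ) (w : W) (t : Fin 2) (c : ℝ) :
    ∑ y, ν y * c * condY q w t y = c * condE ν q w t := by
  rw [condE, mul_sum]
  exact sum_congr rfl fun y _ => by ring

theorem sum_mul_condYW [Fintype W] (ν : Y → ℝ) {q : W → Fin 2 → Y → ℝ} {w : W} {t : Fin 2}
    (c : ℝ) (hwt : pWT q w t ≠ 0) :
    ∑ y, ν y * c * condYW q w t y = c * condW q w t * condE ν q w t := by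
  rw [← sum_mul_condY]
  refine sum_congr rfl fun y _ => ?_
  rw [condYW_eq_condW_mul_condY y hwt]
  ring

end Conditionals

theorem wld_estimable_form_general
    {W Y : Type*} [Fintype W] [Fintype Y]
    (ν : Y → ℝ) (P Q : W → Fin 2 → Y → ℝ)
    (hQt : ∀ t, 0 < pT Q t)
    (hQwt : ∀ w t, 0 < pWT Q w t)
    (hmarg : ∀ w t, condW P w t = pW P w ∧ pW P w = pW Q w)
    (β : W → Fin 2 → ℝ)
    (RcondW : W → Fin 2 → ℝ) (hRcondW : ∀ w t, RcondW w t = β w t * condW Q w t)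
    (βstar : W → Fin 2 → ℝ) (hβstar : ∀ w t, βstar w t = pW Q w / condW Q w t)
    (WLD : Fin 2 → ℝ)
    (hWLD : ∀ t, WLD t = ∑ w, (RcondW w t - condW P w t) * condE ν Q w t) :
    ∀ t : Fin 2,
      WLD t = ∑ w, ∑ y, ν y * β w t * condYW Q w t y -
        ∑ w, ∑ y, ν y * βstar w t * condW Q w t * condY Q w t y := by
  intro t
  have hRterm (w : W) :
      ∑ y, ν y * β w t * condYW Q w t y = RcondW w t * condE ν Q w t := by
    rw [sum_mul_condYW ν _ (hQwt w t).ne', hRcondW]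
  have hPterm (w : W) :
      ∑ y, ν y * βstar w t * condW Q w t * condY Q w t y = condW P w t * condE ν Q w t := by
    have hQcondW : condW Q w t ≠ 0 := (div_pos (hQwt w t) (hQt t)).ne'
    rw [(hmarg w t).1, (hmarg w t).2, ← sum_mul_condY]
    refine sum_congr rfl fun y _ => ?_
    rw [hβstar, mul_assoc (ν y), div_mul_cancel₀ _ hQcondW]
  rw [hWLD]
  simp only [hRterm, hPterm, sub_mul, sum_sub_distrib]

/-- **Estimable form of the weighted L1 distance.** With
`P(w|T=t) = P(w) = Q(w)`, an arbitrary weighting `β`, `R(w|T=t) = β(w,t)·Q(w|T=t)`,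
and the unbiased IPW weights `β*(w,t) = Q(w)/Q(w|T=t)`, for each `t`:
`WLD_{T=t}(R,P) = Σ_w Σ_y y·β(w,t)·Q(y,w|T=t) − Σ_w Σ_y y·β*(w,t)·Q(w|T=t)·Q(y|T=t,W=w)`,
i.e. `WLD_{T=t}(R,P) = E_Q[Yβ|T=t] − E_Q[Yβ*|T=t]`. -/
theorem wld_estimable_form
    {W Y : Type*} [Fintype W] [Fintype Y] [Nonempty W] [Nonempty Y]
    (ν : Y → ℝ) (P Q : W → Fin 2 → Y → ℝ) (hP : IsDist P) (hQ : IsDist Q)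
    (hPt : ∀ t, 0 < pT P t) (hQt : ∀ t, 0 < pT Q t)
    (hPwt : ∀ w t, 0 < pWT P w t) (hQwt : ∀ w t, 0 < pWT Q w t)
    (hPw : ∀ w, 0 < pW P w) (hQw : ∀ w, 0 < pW Q w)
    (hmarg : ∀ w t, condW P w t = pW P w ∧ pW P w = pW Q w)
    (β : W → Fin 2 → ℝ)
    (RcondW : W → Fin 2 → ℝ) (hRcondW : ∀ w t, RcondW w t = β w t * condW Q w t)
    (βstar : W → Fin 2 → ℝ) (hβstar : ∀ w t, βstar w t = pW Q w / condW Q w t)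
    (WLD : Fin 2 → ℝ)
    (hWLD : ∀ t, WLD t = ∑ w, (RcondW w t - condW P w t) * condE ν Q w t) :
    ∀ t : Fin 2,
      WLD t = ∑ w, ∑ y, ν y * β w t * condYW Q w t y -
        ∑ w, ∑ y, ν y * βstar w t * condW Q w t * condY Q w t y :=
  wld_estimable_form_general ν P Q hQt hQwt hmarg β RcondW hRcondW βstar hβstar WLD hWLD
end

section
/- (Unbiasedness of the population IPW contrast for the ACE.) Let P and Q be distributions over (W,T,Y) with q(t) > 0, q(w,t) > 0 and q(w) > 0 for q ∈ {P,Q} and all w ∈ W, t ∈ {0,1}. Assume causal invariance P(y|T=t,W=w) = Q(y|T=t,W=w) for all w,t,y, and P(w|T=t) = P(w) = Q(w) for all w,t. Then Σ_{w∈W} Σ_{y∈𝒴} y·Q(w,1,y)/Q(T=1|W=w) − Σ_{w∈W} Σ_{y∈𝒴} y·Q(w,0,y)/Q(T=0|W=w) = E_P[Y|T=1] − E_P[Y|T=0]; that is, the population IPW functional computed from the confounded source distribution Q equals the average predictive effect under the randomized target distribution P (the average causal effect). -/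
open Finset

/-! Inverse propensity weighting turns `Q(w,t,y) / Q(T=t|W=w)` into `Q(w) · Q(y|T=t,W=w)`,
so the weighted sum over `y` is `Q(w) · E_Q[Y|T=t,W=w]`. Causal invariance replaces the
conditional mean by `E_P[Y|T=t,W=w]`, and randomization of `P` with `P(w) = Q(w)` replaces the
weight `Q(w)` by `P(w|T=t)`, which gives `E_P[Y|T=t]` for each arm. -/

section IPW

variable {W Y : Type*} [Fintype Y]

-- No positivity is needed: both sides vanish when `q(w,t) = 0`, by `x / 0 = 0`.
theorem sum_mul_div_condT (ν : Y → ℝ) (q : W → Fin 2 → Y → ℝ) (w : W) (t : Fin 2) :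
    ∑ y, ν y * q w t y / condT q w t = pW q w * condE ν q w t := by
  rw [condE, mul_sum]
  refine sum_congr rfl fun y _ => ?_
  rw [condT, condY, div_div_eq_mul_div]
  ring

theorem condE_congr (ν : Y → ℝ) {p q : W → Fin 2 → Y → ℝ} {w : W} {t : Fin 2}
    (h : ∀ y, condY p w t y = condY q w t y) : condE ν p w t = condE ν q w t :=
  sum_congr rfl fun y _ => by rw [h]

theorem ipw_sum_eq_Ey [Fintype W] (ν : Y → ℝ) {p q : W → Fin 2 → Y → ℝ} (t : Fin 2)
    (hinv : ∀ w y, condY p w t y = condY q w t y) (hmarg : ∀ w, condW p w t = pW q w) :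
    ∑ w, ∑ y, ν y * q w t y / condT q w t = Ey ν p t := by
  refine sum_congr rfl fun w _ => ?_
  rw [sum_mul_div_condT, hmarg, condE_congr ν (hinv w)]

end IPW

theorem ipw_contrast_eq_ace_general
    {W Y : Type*} [Fintype W] [Fintype Y]
    (ν : Y → ℝ) (P Q : W → Fin 2 → Y → ℝ)
    (hinv : ∀ w t y, condY P w t y = condY Q w t y)
    (hmarg : ∀ w t, condW P w t = pW P w ∧ pW P w = pW Q w) :
    (∑ w, ∑ y, ν y * Q w 1 y / condT Q w 1) -
        (∑ w, ∑ y, ν y * Q w 0 y / condT Q w 0) =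
      Ey ν P 1 - Ey ν P 0 := by
  have hmargQ : ∀ w t, condW P w t = pW Q w := fun w t => (hmarg w t).1.trans (hmarg w t).2
  rw [ipw_sum_eq_Ey ν 1 (fun w => hinv w 1) (fun w => hmargQ w 1),
    ipw_sum_eq_Ey ν 0 (fun w => hinv w 0) (fun w => hmargQ w 0)]

/-- **Unbiasedness of the population IPW contrast for the ACE.**
Under causal invariance between `P` and `Q` and `P(w|T=t) = P(w) = Q(w)`, the
population IPW functional computed from the confounded source `Q` equals the average
predictive effect under the randomized target `P`:
`Σ_w Σ_y y·Q(w,1,y)/Q(T=1|W=w) − Σ_w Σ_y y·Q(w,0,y)/Q(T=0|W=w)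
  = E_P[Y|T=1] − E_P[Y|T=0]`. -/
theorem ipw_contrast_eq_ace
    {W Y : Type*} [Fintype W] [Fintype Y] [Nonempty W] [Nonempty Y]
    (ν : Y → ℝ) (P Q : W → Fin 2 → Y → ℝ) (hP : IsDist P) (hQ : IsDist Q)
    (hPt : ∀ t, 0 < pT P t) (hQt : ∀ t, 0 < pT Q t)
    (hPwt : ∀ w t, 0 < pWT P w t) (hQwt : ∀ w t, 0 < pWT Q w t)
    (hPw : ∀ w, 0 < pW P w) (hQw : ∀ w, 0 < pW Q w)
    (hinv : ∀ w t y, condY P w t y = condY Q w t y)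
    (hmarg : ∀ w t, condW P w t = pW P w ∧ pW P w = pW Q w) :
    (∑ w, ∑ y, ν y * Q w 1 y / condT Q w 1) -
        (∑ w, ∑ y, ν y * Q w 0 y / condT Q w 0) =
      Ey ν P 1 - Ey ν P 0 :=
  ipw_contrast_eq_ace_general ν P Q hinv hmarg
end
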